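/- For every m ≥ 1, all n, k, l ∈ ℕ and every r > 0 there exists a constant C = C(n,k,l) > 0 such that for every smooth function f on the closed ball B̄_r ⊂ ℝ^m that is flat at the origin, one has |f|_{n,k+l,r} ≤ C · |f|_{n+l,k,r}. -/

import Mathlib

/-!
Write `g = ‖x‖⁻ᵏ f`, so that `‖x‖⁻⁽ᵏ⁺ˡ⁾ f = ‖x‖⁻ˡ g` on the punctured ball. Since `f` is flat, every
derivative of `g` is `O(‖x‖)` at the origin; hence the supremum defining `|f|_{n+l,k,r}` is finite,
and integrating the bound `‖D^{j+l} g‖ ≤ |f|_{n+l,k,r}` along rays from the origin `l + i` times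
gives `‖D^{j-i} g (x)‖ ≤ ‖x‖^{l+i} |f|_{n+l,k,r}`. The weight `‖x‖⁻ˡ` is homogeneous of degree
`-l`, so compactness of the unit sphere gives `‖D^i ‖x‖⁻ˡ‖ ≤ C ‖x‖^{-l-i}`. In the Leibniz formula
for `D^j (‖x‖⁻ˡ g)` the powers of `‖x‖` then cancel term by term.
-/

open Metric Set

/-- The norm `|f|_{n,k,r}`: the `C^n` norm (over the punctured closed ball) of the
function `x ↦ |x|^{-k} f(x)`. -/
noncomputable def weightedCnNorm (m : ℕ) (r : ℝ) (n k : ℕ)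
    (f : EuclideanSpace ℝ (Fin m) → ℝ) : ℝ :=
  ⨆ p : (closedBall (0 : EuclideanSpace ℝ (Fin m)) r \ {0} :
      Set (EuclideanSpace ℝ (Fin m))) × Fin (n + 1),
    ‖iteratedFDerivWithin ℝ p.2
      (fun y : EuclideanSpace ℝ (Fin m) => ‖y‖ ^ (-(k : ℤ)) * f y)
      (closedBall 0 r) p.1‖

open Filter Topology

section Scaling

variable {𝕜 E F : Type*} [NontriviallyNormedField 𝕜] [NormedAddCommGroup E] [NormedSpace 𝕜 E]
  [NormedAddCommGroup F] [NormedSpace 𝕜 F]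

theorem iteratedFDeriv_comp_const_smul_of_ne_zero {a : 𝕜} (ha : a ≠ 0) (f : E → F) (x : E)
    (i : ℕ) :
    iteratedFDeriv 𝕜 i (fun z ↦ f (a • z)) x = a ^ i • iteratedFDeriv 𝕜 i f (a • x) := by
  let g : E ≃L[𝕜] E := ContinuousLinearEquiv.smulLeft (Units.mk0 a ha)
  have h := g.iteratedFDerivWithin_comp_right f uniqueDiffOn_univ (x := x) (mem_univ _) i
  simp only [preimage_univ, iteratedFDerivWithin_univ] at h
  have hg : ∀ z, g z = a • z := fun z ↦ rfl
  have hfg : (fun z ↦ f (a • z)) = f ∘ g := funext fun z ↦ by simp only [Function.comp_apply, hg]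
  ext v
  rw [hfg, h, ContinuousMultilinearMap.compContinuousLinearMap_apply]
  simp only [ContinuousLinearEquiv.coe_coe, hg, ContinuousMultilinearMap.map_smul_univ]
  simp

end Scaling

section Homogeneous

variable {E F : Type*} [NormedAddCommGroup E] [NormedSpace ℝ E] [FiniteDimensional ℝ E]
  [NormedAddCommGroup F] [NormedSpace ℝ F]

theorem exists_norm_iteratedFDeriv_le_of_homogeneous {w : E → F} {c : ℤ} {N : ℕ}
    (hw : ∀ x ≠ 0, ContDiffAt ℝ N w x) (hhom : ∀ a : ℝ, 0 < a → ∀ y, w (a • y) = a ^ c • w y) :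
    ∃ C > 0, ∀ i ≤ N, ∀ x ≠ 0, ‖iteratedFDeriv ℝ i w x‖ ≤ C * ‖x‖ ^ (c - i) := by
  have hsphere : ∀ i ∈ Iic N, ∀ᶠ C in atTop,
      ∀ u ∈ sphere (0 : E) 1, ‖iteratedFDeriv ℝ i w u‖ ≤ C := by
    intro i hi
    obtain ⟨C, hC⟩ := (isCompact_sphere (0 : E) 1).exists_bound_of_continuousOn fun u hu ↦
      ((hw u (ne_zero_of_mem_unit_sphere ⟨u, hu⟩)).continuousAt_iteratedFDeriv
        (mod_cast hi)).continuousWithinAt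
    exact (eventually_ge_atTop C).mono fun C' hC' u hu ↦ (hC u hu).trans hC'
  obtain ⟨C, hC, hC0⟩ :=
    (((finite_Iic N).eventually_all.2 hsphere).and (eventually_gt_atTop 0)).exists
  refine ⟨C, hC0, fun i hi x hx ↦ ?_⟩
  set a := ‖x‖
  have ha : 0 < a := norm_pos_iff.2 hx
  set u := a⁻¹ • x
  have hu : u ∈ sphere (0 : E) 1 := by simp [u, norm_smul, ha.ne', a]
  have hscale : a ^ i * ‖iteratedFDeriv ℝ i w x‖ = a ^ c * ‖iteratedFDeriv ℝ i w u‖ := by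
    have hcomp : (fun z ↦ w (a • z)) = a ^ c • w := funext (hhom a ha)
    have := iteratedFDeriv_comp_const_smul_of_ne_zero ha.ne' w u i
    rw [hcomp, iteratedFDeriv_const_smul_apply
      ((hw u (ne_zero_of_mem_unit_sphere ⟨u, hu⟩)).of_le (mod_cast hi)),
      smul_inv_smul₀ ha.ne'] at this
    simpa [norm_smul, abs_of_pos ha] using (congrArg norm this).symm
  calc ‖iteratedFDeriv ℝ i w x‖ = a ^ c * ‖iteratedFDeriv ℝ i w u‖ / a ^ i := by
        rw [← hscale]; field_simp
    _ ≤ a ^ c * C / a ^ i := by gcongr; exact hC i hi u hu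
    _ = C * a ^ (c - i) := by rw [zpow_sub₀ ha.ne', zpow_natCast]; ring

end Homogeneous

section VanishingOrder

variable {E F : Type*} [NormedAddCommGroup E] [NormedSpace ℝ E]
  [NormedAddCommGroup F] [NormedSpace ℝ F]

theorem norm_le_mul_norm_of_fderivWithin_le_on_ray {h : E → F} {t : Set E} {x : E} {M : ℝ}
    (hray : ∀ θ ∈ Ioc (0 : ℝ) 1, θ • x ∈ t) (hd : DifferentiableOn ℝ h t)
    (hM : ∀ θ ∈ Ioc (0 : ℝ) 1, ‖fderivWithin ℝ h t (θ • x)‖ ≤ M)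
    (h0 : Tendsto (fun θ : ℝ ↦ h (θ • x)) (𝓝[>] 0) (𝓝 0)) :
    ‖h x‖ ≤ M * ‖x‖ := by
  set R := (fun θ : ℝ ↦ θ • x) '' Ioc 0 1
  have hRt : R ⊆ t := image_subset_iff.2 hray
  have hR : Convex ℝ R := (convex_Ioc 0 1).linear_image (LinearMap.toSpanSingleton ℝ E x)
  have hM0 : 0 ≤ M := (norm_nonneg _).trans (hM 1 ⟨one_pos, le_rfl⟩)
  have hx : x ∈ R := ⟨1, ⟨one_pos, le_rfl⟩, one_smul ℝ x⟩
  have hclose : ∀ θ ∈ Ioc (0 : ℝ) 1, ‖h x‖ ≤ M * ‖x‖ + ‖h (θ • x)‖ := by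
    intro θ hθ
    have hmvt := hR.norm_image_sub_le_of_norm_hasFDerivWithin_le
      (fun y hy ↦ (hd y (hRt hy)).hasFDerivWithinAt.mono hRt)
      (by rintro _ ⟨θ', hθ', rfl⟩; exact hM θ' hθ') (mem_image_of_mem _ hθ) hx
    have hdist : ‖x - θ • x‖ ≤ ‖x‖ := by
      rw [show x - θ • x = (1 - θ) • x by rw [sub_smul, one_smul], norm_smul,
        Real.norm_of_nonneg (by linarith [hθ.2])]
      exact mul_le_of_le_one_left (norm_nonneg x) (by linarith [hθ.1])
    calc ‖h x‖ ≤ ‖h x - h (θ • x)‖ + ‖h (θ • x)‖ := norm_le_norm_sub_add _ _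
      _ ≤ M * ‖x‖ + ‖h (θ • x)‖ := by gcongr; exact hmvt.trans (by gcongr)
  simpa using ge_of_tendsto (h0.norm.const_add (M * ‖x‖))
    (eventually_of_mem (Ioc_mem_nhdsGT one_pos) hclose)

theorem norm_iteratedFDerivWithin_le_pow_mul_of_tendsto_zero {g : E → F} {t : Set E} {N : ℕ}
    {G : ℝ} (hstar : ∀ x ∈ t, ∀ θ ∈ Ioc (0 : ℝ) 1, θ • x ∈ t) (ht : UniqueDiffOn ℝ t)
    (hg : ContDiffOn ℝ N g t) (hG : ∀ x ∈ t, ‖iteratedFDerivWithin ℝ N g t x‖ ≤ G)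
    (h0 : ∀ p < N, Tendsto (iteratedFDerivWithin ℝ p g t) (𝓝[t] 0) (𝓝 0)) :
    ∀ p ≤ N, ∀ x ∈ t, ‖iteratedFDerivWithin ℝ p g t x‖ ≤ ‖x‖ ^ (N - p) * G := by
  suffices ∀ q p, p + q = N → ∀ x ∈ t, ‖iteratedFDerivWithin ℝ p g t x‖ ≤ ‖x‖ ^ q * G from
    fun p hp ↦ this (N - p) p (by omega)
  intro q
  induction q with
  | zero => intro p hp x hx; obtain rfl : p = N := hp; simpa using hG x hx
  | succ q ih =>
    intro p hp x hx
    have hG0 : 0 ≤ G := (norm_nonneg _).trans (hG x hx)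
    have hray : Tendsto (fun θ : ℝ ↦ θ • x) (𝓝[>] 0) (𝓝[t] 0) := by
      refine tendsto_nhdsWithin_iff.2 ⟨?_, eventually_of_mem (Ioc_mem_nhdsGT one_pos) (hstar x hx)⟩
      exact ((continuous_id.smul continuous_const : Continuous fun θ : ℝ ↦ θ • x).tendsto' 0 0
        (zero_smul ℝ x)).mono_left nhdsWithin_le_nhds
    calc ‖iteratedFDerivWithin ℝ p g t x‖ ≤ ‖x‖ ^ q * G * ‖x‖ := by
          refine norm_le_mul_norm_of_fderivWithin_le_on_ray (hstar x hx)
            (hg.differentiableOn_iteratedFDerivWithin (by exact_mod_cast (by omega : p < N)) ht)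
            (fun θ hθ ↦ ?_) ((h0 p (by omega)).comp hray)
          rw [norm_fderivWithin_iteratedFDerivWithin]
          refine (ih (p + 1) (by omega) _ (hstar x hx θ hθ)).trans ?_
          have : ‖θ • x‖ ≤ ‖x‖ := by
            rw [norm_smul, Real.norm_of_nonneg hθ.1.le]
            exact mul_le_of_le_one_left (norm_nonneg x) hθ.2
          gcongr
      _ = ‖x‖ ^ (q + 1) * G := by ring

end VanishingOrder

theorem norm_iteratedFDerivWithin_mul_le_of_zpow_bounds {𝕜 E 𝔸 : Type*}
    [NontriviallyNormedField 𝕜] [NormedAddCommGroup E] [NormedSpace 𝕜 E] [NormedRing 𝔸]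
    [NormedAlgebra 𝕜 𝔸] {f g : E → 𝔸} {s : Set E} {x : E} {n : WithTop ℕ∞} {p : ℕ}
    (hf : ContDiffOn 𝕜 n f s) (hg : ContDiffOn 𝕜 n g s) (hs : UniqueDiffOn 𝕜 s) (hx : x ∈ s)
    (hp : p ≤ n) {ρ A B : ℝ} {a b : ℤ} (hρ : ρ ≠ 0)
    (hfb : ∀ i ≤ p, ‖iteratedFDerivWithin 𝕜 i f s x‖ ≤ A * ρ ^ (a - i))
    (hgb : ∀ i ≤ p, ‖iteratedFDerivWithin 𝕜 i g s x‖ ≤ B * ρ ^ (b - i)) :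
    ‖iteratedFDerivWithin 𝕜 p (fun y ↦ f y * g y) s x‖ ≤ 2 ^ p * A * B * ρ ^ (a + b - p) := by
  have hterm : ∀ i ∈ Finset.range (p + 1), (p.choose i : ℝ) * ‖iteratedFDerivWithin 𝕜 i f s x‖ *
      ‖iteratedFDerivWithin 𝕜 (p - i) g s x‖ ≤ p.choose i * (A * B * ρ ^ (a + b - p)) := by
    intro i hi
    have hip : i ≤ p := Finset.mem_range_succ_iff.1 hi
    have hexp : ρ ^ (a - i) * ρ ^ (b - (p - i : ℕ)) = ρ ^ (a + b - p) := by
      rw [← zpow_add₀ hρ, Nat.cast_sub hip]; ring_nf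
    calc (p.choose i : ℝ) * ‖iteratedFDerivWithin 𝕜 i f s x‖ *
          ‖iteratedFDerivWithin 𝕜 (p - i) g s x‖
        ≤ p.choose i * (A * ρ ^ (a - i)) * (B * ρ ^ (b - (p - i : ℕ))) := by
          have hA : 0 ≤ A * ρ ^ (a - i) := (norm_nonneg _).trans (hfb i hip)
          gcongr
          exacts [hfb i hip, hgb (p - i) (Nat.sub_le p i)]
      _ = p.choose i * (A * B * ρ ^ (a + b - p)) := by rw [← hexp]; ring
  calc ‖iteratedFDerivWithin 𝕜 p (fun y ↦ f y * g y) s x‖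
      ≤ ∑ i ∈ Finset.range (p + 1), (p.choose i : ℝ) * ‖iteratedFDerivWithin 𝕜 i f s x‖ *
          ‖iteratedFDerivWithin 𝕜 (p - i) g s x‖ := norm_iteratedFDerivWithin_mul_le hf hg hs hx hp
    _ ≤ ∑ i ∈ Finset.range (p + 1), (p.choose i : ℝ) * (A * B * ρ ^ (a + b - p)) :=
        Finset.sum_le_sum hterm
    _ = 2 ^ p * A * B * ρ ^ (a + b - p) := by
        rw [← Finset.sum_mul, ← Nat.cast_sum, Nat.sum_range_choose]; push_cast; ring

section NormZpow

variable {E : Type*} [NormedAddCommGroup E] [InnerProductSpace ℝ E]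

theorem contDiffAt_norm_zpow {n : WithTop ℕ∞} (c : ℤ) {x : E} (hx : x ≠ 0) :
    ContDiffAt ℝ n (fun y : E ↦ ‖y‖ ^ c) x := by
  simpa only [Function.comp_def, Real.rpow_intCast] using
    (Real.contDiffAt_rpow_const_of_ne (p := c) (norm_ne_zero_iff.2 hx)).comp x
      (contDiffAt_norm ℝ hx)

theorem ContDiffOn.norm_zpow_mul {n : WithTop ℕ∞} {s : Set E} {f : E → ℝ}
    (hf : ContDiffOn ℝ n f s) (c : ℤ) : ContDiffOn ℝ n (fun y ↦ ‖y‖ ^ c * f y) (s \ {0}) :=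
  fun y hy ↦ (contDiffAt_norm_zpow c hy.2).contDiffWithinAt.mul (hf.mono sdiff_subset y hy)

theorem exists_norm_iteratedFDerivWithin_norm_zpow_le [FiniteDimensional ℝ E] (c : ℤ) (N : ℕ) :
    ∃ C > 0, ∀ {t : Set E}, UniqueDiffOn ℝ t → ∀ x ∈ t, x ≠ 0 → ∀ i ≤ N,
      ‖iteratedFDerivWithin ℝ i (fun y : E ↦ ‖y‖ ^ c) t x‖ ≤ C * ‖x‖ ^ (c - i) := by
  obtain ⟨C, hC0, hC⟩ :=
    exists_norm_iteratedFDeriv_le_of_homogeneous (w := fun y : E ↦ ‖y‖ ^ c) (N := N)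
      (fun x hx ↦ contDiffAt_norm_zpow c hx)
      (fun a ha y ↦ by rw [norm_smul, Real.norm_of_nonneg ha.le, mul_zpow, smul_eq_mul])
  refine ⟨C, hC0, fun ht x hx hx0 i hi ↦ ?_⟩
  rw [iteratedFDerivWithin_eq_iteratedFDeriv ht (contDiffAt_norm_zpow c hx0) hx]
  exact hC i hi x hx0

end NormZpow

section PuncturedBall

variable {E : Type*} [NormedAddCommGroup E] [NormedSpace ℝ E] {r : ℝ}

theorem uniqueDiffOn_closedBall (x : E) (hr : 0 < r) : UniqueDiffOn ℝ (closedBall x r) :=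
  uniqueDiffOn_convex (convex_closedBall x r)
    ((nonempty_ball.2 hr).mono ball_subset_interior_closedBall)

theorem uniqueDiffOn_closedBall_diff_zero (hr : 0 < r) :
    UniqueDiffOn ℝ (closedBall (0 : E) r \ {0}) := by
  rw [sdiff_eq]
  exact (uniqueDiffOn_closedBall 0 hr).inter isOpen_compl_singleton

theorem smul_mem_closedBall_diff_zero {x : E} (hx : x ∈ closedBall (0 : E) r \ {0}) {θ : ℝ}
    (hθ : θ ∈ Ioc (0 : ℝ) 1) : θ • x ∈ closedBall (0 : E) r \ {0} := by
  refine ⟨?_, smul_ne_zero hθ.1.ne' hx.2⟩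
  rw [mem_closedBall_zero_iff, norm_smul, Real.norm_of_nonneg hθ.1.le]
  exact (mul_le_of_le_one_left (norm_nonneg x) hθ.2).trans (mem_closedBall_zero_iff.1 hx.1)

theorem iteratedFDerivWithin_closedBall_diff_zero {F : Type*} [NormedAddCommGroup F]
    [NormedSpace ℝ F] (f : E → F) (i : ℕ) {x : E} (hx : x ≠ 0) :
    iteratedFDerivWithin ℝ i f (closedBall 0 r \ {0}) x =
      iteratedFDerivWithin ℝ i f (closedBall 0 r) x := by
  rw [sdiff_eq]
  exact iteratedFDerivWithin_inter_open isOpen_compl_singleton hx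

end PuncturedBall

section Flat

variable {E : Type*} [NormedAddCommGroup E] [InnerProductSpace ℝ E] [FiniteDimensional ℝ E]
  {r : ℝ} {f : E → ℝ}

theorem exists_norm_iteratedFDerivWithin_norm_zpow_mul_le_of_flat (hr : 0 < r)
    (hf : ContDiffOn ℝ (⊤ : ℕ∞) f (closedBall 0 r))
    (hflat : ∀ i : ℕ, iteratedFDerivWithin ℝ i f (closedBall 0 r) 0 = 0) (k p : ℕ) :
    ∃ K, ∀ x ∈ closedBall (0 : E) r \ {0},
      ‖iteratedFDerivWithin ℝ p (fun y ↦ ‖y‖ ^ (-(k : ℤ)) * f y) (closedBall 0 r \ {0}) x‖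
        ≤ K * ‖x‖ := by
  set s := closedBall (0 : E) r
  set N := k + p + 1
  have hs : UniqueDiffOn ℝ s := uniqueDiffOn_closedBall 0 hr
  obtain ⟨Mf, hMf⟩ := (isCompact_closedBall (0 : E) r).exists_bound_of_continuousOn
    (hf.continuousOn_iteratedFDerivWithin (m := N) (mod_cast le_top) hs)
  have hfx : ∀ i ≤ N, ∀ x ∈ s, ‖iteratedFDerivWithin ℝ i f s x‖ ≤ ‖x‖ ^ (N - i) * Mf :=
    norm_iteratedFDerivWithin_le_pow_mul_of_tendsto_zero
      (fun x hx θ hθ ↦ (convex_closedBall 0 r).smul_mem_of_zero_mem (mem_closedBall_self hr.le)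
        hx ⟨hθ.1.le, hθ.2⟩) hs (hf.of_le (mod_cast le_top)) hMf fun i _ ↦ by
      simpa only [ContinuousWithinAt, hflat i] using
        hf.continuousOn_iteratedFDerivWithin (m := i) (mod_cast le_top) hs 0
          (mem_closedBall_self hr.le)
  obtain ⟨Ck, -, hCk⟩ := exists_norm_iteratedFDerivWithin_norm_zpow_le (E := E) (-(k : ℤ)) p
  refine ⟨2 ^ p * Ck * Mf, fun x hx ↦ ?_⟩
  have ht := uniqueDiffOn_closedBall_diff_zero (E := E) hr
  have hprod := norm_iteratedFDerivWithin_mul_le_of_zpow_bounds (n := (⊤ : ℕ∞)) (b := N)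
    (fun y hy ↦ (contDiffAt_norm_zpow _ hy.2).contDiffWithinAt) (hf.mono sdiff_subset) ht hx
    (mod_cast le_top) (norm_ne_zero_iff.2 hx.2) (hCk ht x hx hx.2) fun i hi ↦ by
      rw [iteratedFDerivWithin_closedBall_diff_zero _ _ hx.2, mul_comm,
        show (N : ℤ) - i = (N - i : ℕ) by omega, zpow_natCast]
      exact hfx i (by omega) x hx.1
  rwa [show -(k : ℤ) + N - p = 1 by omega, zpow_one] at hprod

end Flat

section WeightedNorm

variable {m : ℕ} {r : ℝ} {n k : ℕ} {f : EuclideanSpace ℝ (Fin m) → ℝ}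

theorem weightedCnNorm_nonneg : 0 ≤ weightedCnNorm m r n k f :=
  Real.iSup_nonneg fun _ ↦ norm_nonneg _

theorem weightedCnNorm_le {B : ℝ} (hB : 0 ≤ B)
    (h : ∀ p ≤ n, ∀ x ∈ closedBall (0 : EuclideanSpace ℝ (Fin m)) r \ {0},
      ‖iteratedFDerivWithin ℝ p (fun y ↦ ‖y‖ ^ (-(k : ℤ)) * f y) (closedBall 0 r \ {0}) x‖ ≤ B) :
    weightedCnNorm m r n k f ≤ B := by
  refine Real.iSup_le (fun ⟨⟨x, hx⟩, p⟩ ↦ ?_) hB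
  rw [← iteratedFDerivWithin_closedBall_diff_zero _ _ hx.2]
  exact h p (Nat.lt_succ_iff.1 p.2) x hx

theorem norm_iteratedFDerivWithin_le_weightedCnNorm
    (hbdd : ∀ p ≤ n, ∃ B, ∀ x ∈ closedBall (0 : EuclideanSpace ℝ (Fin m)) r \ {0},
      ‖iteratedFDerivWithin ℝ p (fun y ↦ ‖y‖ ^ (-(k : ℤ)) * f y) (closedBall 0 r \ {0}) x‖ ≤ B)
    {p : ℕ} (hp : p ≤ n) {x : EuclideanSpace ℝ (Fin m)}
    (hx : x ∈ closedBall (0 : EuclideanSpace ℝ (Fin m)) r \ {0}) :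
    ‖iteratedFDerivWithin ℝ p (fun y ↦ ‖y‖ ^ (-(k : ℤ)) * f y) (closedBall 0 r \ {0}) x‖
      ≤ weightedCnNorm m r n k f := by
  have hev : ∀ p ∈ Iic n, ∀ᶠ B in atTop, ∀ x ∈ closedBall (0 : EuclideanSpace ℝ (Fin m)) r \ {0},
      ‖iteratedFDerivWithin ℝ p (fun y ↦ ‖y‖ ^ (-(k : ℤ)) * f y) (closedBall 0 r \ {0}) x‖
        ≤ B := by
    intro p hp
    obtain ⟨B, hB⟩ := hbdd p hp
    exact (eventually_ge_atTop B).mono fun B' hB' x hx ↦ (hB x hx).trans hB'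
  obtain ⟨B, hB⟩ := ((finite_Iic n).eventually_all.2 hev).exists
  have hrange : BddAbove (range fun q : (closedBall (0 : EuclideanSpace ℝ (Fin m)) r \ {0} :
      Set (EuclideanSpace ℝ (Fin m))) × Fin (n + 1) ↦
      ‖iteratedFDerivWithin ℝ q.2 (fun y ↦ ‖y‖ ^ (-(k : ℤ)) * f y) (closedBall 0 r) q.1‖) := by
    refine ⟨B, ?_⟩
    rintro _ ⟨⟨⟨y, hy⟩, q⟩, rfl⟩
    dsimp only
    rw [← iteratedFDerivWithin_closedBall_diff_zero _ _ hy.2]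
    exact hB q (Nat.lt_succ_iff.1 q.2) y hy
  rw [iteratedFDerivWithin_closedBall_diff_zero _ _ hx.2]
  exact le_ciSup hrange ⟨⟨x, hx⟩, ⟨p, Nat.lt_succ_of_le hp⟩⟩

theorem norm_iteratedFDerivWithin_le_pow_mul_weightedCnNorm_of_flat (hr : 0 < r)
    (hf : ContDiffOn ℝ (⊤ : ℕ∞) f (closedBall 0 r))
    (hflat : ∀ i : ℕ, iteratedFDerivWithin ℝ i f (closedBall 0 r) 0 = 0) (k : ℕ) {N M : ℕ}
    (hNM : N ≤ M) :
    ∀ p ≤ N, ∀ x ∈ closedBall (0 : EuclideanSpace ℝ (Fin m)) r \ {0},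
      ‖iteratedFDerivWithin ℝ p (fun y ↦ ‖y‖ ^ (-(k : ℤ)) * f y) (closedBall 0 r \ {0}) x‖
        ≤ ‖x‖ ^ (N - p) * weightedCnNorm m r M k f := by
  have hK := exists_norm_iteratedFDerivWithin_norm_zpow_mul_le_of_flat hr hf hflat k
  refine norm_iteratedFDerivWithin_le_pow_mul_of_tendsto_zero
    (fun x hx θ hθ ↦ smul_mem_closedBall_diff_zero hx hθ) (uniqueDiffOn_closedBall_diff_zero hr)
    ((hf.norm_zpow_mul _).of_le (mod_cast le_top))
    (fun x hx ↦ norm_iteratedFDerivWithin_le_weightedCnNorm (fun p _ ↦ ?_) hNM hx)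
    (fun p _ ↦ ?_)
  · obtain ⟨K, hK⟩ := hK p
    exact ⟨|K| * r, fun y hy ↦ (hK y hy).trans <| mul_le_mul (le_abs_self K)
      (mem_closedBall_zero_iff.1 hy.1) (norm_nonneg y) (abs_nonneg K)⟩
  · obtain ⟨K, hK⟩ := hK p
    refine squeeze_zero_norm' (eventually_nhdsWithin_of_forall hK) ?_
    simpa using (tendsto_norm_zero.const_mul K).mono_left nhdsWithin_le_nhds

end WeightedNorm

/-- for all `m ≥ 1`, `n k l : ℕ` and `r > 0` there is `C > 0` such that for
every smooth `f` on `B̄_r` flat at the origin, `|f|_{n,k+l,r} ≤ C |f|_{n+l,k,r}`. -/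
theorem weightedCnNorm_weight_shift :
    ∀ m : ℕ, 1 ≤ m → ∀ n k l : ℕ, ∀ r : ℝ, 0 < r →
      ∃ C > (0 : ℝ), ∀ f : EuclideanSpace ℝ (Fin m) → ℝ,
        ContDiffOn ℝ (⊤ : ℕ∞) f (closedBall 0 r) →
        (∀ i : ℕ, iteratedFDerivWithin ℝ i f (closedBall 0 r) 0 = 0) →
        weightedCnNorm m r n (k + l) f ≤ C * weightedCnNorm m r (n + l) k f := by
  intro m _ n k l r hr
  obtain ⟨Cl, hCl, hwl⟩ :=
    exists_norm_iteratedFDerivWithin_norm_zpow_le (E := EuclideanSpace ℝ (Fin m)) (-(l : ℤ)) n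
  refine ⟨2 ^ n * Cl, by positivity, fun f hf hflat ↦ ?_⟩
  set t := closedBall (0 : EuclideanSpace ℝ (Fin m)) r \ {0}
  set g := fun y : EuclideanSpace ℝ (Fin m) ↦ ‖y‖ ^ (-(k : ℤ)) * f y
  set G := weightedCnNorm m r (n + l) k f
  have hG : 0 ≤ G := weightedCnNorm_nonneg
  have ht : UniqueDiffOn ℝ t := uniqueDiffOn_closedBall_diff_zero hr
  refine weightedCnNorm_le (by positivity) fun j hj x hx ↦ ?_
  have hshift : EqOn (fun y ↦ ‖y‖ ^ (-((k + l : ℕ) : ℤ)) * f y)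
      (fun y ↦ ‖y‖ ^ (-(l : ℤ)) * g y) t := fun y hy ↦ by
    simp only [g, ← mul_assoc, ← zpow_add₀ (norm_ne_zero_iff.2 hy.2)]
    push_cast; ring_nf
  have hgx := norm_iteratedFDerivWithin_le_pow_mul_weightedCnNorm_of_flat hr hf hflat k
    (Nat.add_le_add_right hj l)
  rw [iteratedFDerivWithin_congr hshift hx]
  calc _ ≤ 2 ^ j * Cl * G * ‖x‖ ^ (-(l : ℤ) + (j + l : ℕ) - j) :=
        norm_iteratedFDerivWithin_mul_le_of_zpow_bounds (n := (⊤ : ℕ∞))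
          (fun y hy ↦ (contDiffAt_norm_zpow _ hy.2).contDiffWithinAt) (hf.norm_zpow_mul _) ht hx
          (mod_cast le_top) (norm_ne_zero_iff.2 hx.2) (fun i hi ↦ hwl ht x hx hx.2 i (hi.trans hj))
          fun i hi ↦ by
            rw [mul_comm, show ((j + l : ℕ) : ℤ) - i = (j + l - i : ℕ) by omega, zpow_natCast]
            exact hgx i (by omega) x hx
    _ ≤ 2 ^ n * Cl * G := by
        rw [show -(l : ℤ) + (j + l : ℕ) - j = 0 by omega, zpow_zero, mul_one]
        gcongr
        exact one_le_two
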